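/- arXiv:2605.15747 — 2 statements merged into one kernel-verified Lean document; each statement's English description precedes it below -/
import Mathlib

section
/- (Amplitudes are linear in u_A.) Fix γ ∈ [0,π/2] and let U_A, U_B ∈ SU(2) have real-vector representations u_A, u_B ∈ ℝ⁴. Let |ψ_f⟩ := J(γ)†(U_A⊗U_B)J(γ)|00⟩. Then for all j,k ∈ {0,1}: ⟨jk|ψ_f⟩ = u_Aᵀ · M_{jk}(u_B) (the bilinear pairing of the real vector u_A with the complex vector M_{jk}(u_B)). Consequently, for any real payoff matrix (a_{jk}), the expected payoff satisfies Σ_{j,k} a_{jk} |⟨jk|ψ_f⟩|² = Σ_{j,k} a_{jk} |u_Aᵀ M_{jk}(u_B)|². -/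
open Complex Real Matrix Kronecker

/-- The Pauli matrix σx. -/
def sigmaX : Matrix (Fin 2) (Fin 2) ℂ := !![0, 1; 1, 0]

/-- The Pauli matrix σy. -/
def sigmaY : Matrix (Fin 2) (Fin 2) ℂ := !![0, -Complex.I; Complex.I, 0]

/-- The Pauli matrix σz. -/
def sigmaZ : Matrix (Fin 2) (Fin 2) ℂ := !![1, 0; 0, -1]

/-- `u ∈ ℝ⁴` is the real-vector representation of `U`:
`U = u¹·I + i u²·σx + i u³·σy + i u⁴·σz`. -/
def IsRealRep (u : Fin 4 → ℝ) (U : Matrix (Fin 2) (Fin 2) ℂ) : Prop :=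
  U = (u 0 : ℂ) • (1 : Matrix (Fin 2) (Fin 2) ℂ)
      + (Complex.I * (u 1 : ℂ)) • sigmaX
      + (Complex.I * (u 2 : ℂ)) • sigmaY
      + (Complex.I * (u 3 : ℂ)) • sigmaZ

/-- The EWL entangling operator `J(γ) = cos(γ/2)·(I⊗I) + i·sin(γ/2)·(σx⊗σx)`. -/
noncomputable def Jmat (γ : ℝ) : Matrix (Fin 2 × Fin 2) (Fin 2 × Fin 2) ℂ :=
  (Real.cos (γ / 2) : ℂ) • ((1 : Matrix (Fin 2) (Fin 2) ℂ) ⊗ₖ (1 : Matrix (Fin 2) (Fin 2) ℂ))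
    + (Complex.I * Real.sin (γ / 2)) • (sigmaX ⊗ₖ sigmaX)

/-- The basis state `|jk⟩ = |j⟩⊗|k⟩` of `ℂ²⊗ℂ² ≅ ℂ⁴`. -/
def ket (j k : Fin 2) : Fin 2 × Fin 2 → ℂ := fun p => if p = (j, k) then 1 else 0

/-- The Hermitian inner product `⟨v|w⟩` on `ℂ⁴`. -/
noncomputable def braket (v w : Fin 2 × Fin 2 → ℂ) : ℂ := ∑ p, (starRingEnd ℂ) (v p) * w p

/-- The EWL amplitude `⟨jk| J(γ)† (U_A⊗U_B) J(γ) |00⟩`. -/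
noncomputable def amp (γ : ℝ) (UA UB : Matrix (Fin 2) (Fin 2) ℂ) (j k : Fin 2) : ℂ :=
  braket (ket j k) ((Jmat γ)ᴴ *ᵥ ((UA ⊗ₖ UB) *ᵥ (Jmat γ *ᵥ ket 0 0)))

/-- The complex vectors `M_{jk}(u) ∈ ℂ⁴` expressing the EWL amplitudes as linear
functions of the opponent's real-vector representation. -/
noncomputable def Mvec (γ : ℝ) (j k : Fin 2) (u : Fin 4 → ℝ) : Fin 4 → ℂ :=
  if j = 0 then
    if k = 0 then
      ![(u 0 : ℂ) + Complex.I * (u 3 : ℂ) * Real.cos γ,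
        -(u 2 : ℂ) * Real.sin γ,
        -(u 1 : ℂ) * Real.sin γ,
        -(u 3 : ℂ) + Complex.I * (u 0 : ℂ) * Real.cos γ]
    else
      ![Complex.I * (u 1 : ℂ) - (u 2 : ℂ) * Real.cos γ,
        Complex.I * (u 3 : ℂ) * Real.sin γ,
        Complex.I * (u 0 : ℂ) * Real.sin γ,
        -(u 1 : ℂ) * Real.cos γ - Complex.I * (u 2 : ℂ)]
  else
    if k = 0 then
      ![Complex.I * (u 2 : ℂ) * Real.sin γ,
        Complex.I * (u 0 : ℂ) - (u 3 : ℂ) * Real.cos γ,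
        -Complex.I * (u 3 : ℂ) - (u 0 : ℂ) * Real.cos γ,
        Complex.I * (u 1 : ℂ) * Real.sin γ]
    else
      ![(u 3 : ℂ) * Real.sin γ,
        -(u 1 : ℂ) - Complex.I * (u 2 : ℂ) * Real.cos γ,
        (u 2 : ℂ) - Complex.I * (u 1 : ℂ) * Real.cos γ,
        (u 0 : ℂ) * Real.sin γ]

/-- The bilinear pairing `uᵀ·M` of a real vector `u ∈ ℝ⁴` with a complex vector `M ∈ ℂ⁴`. -/
noncomputable def pairing (u : Fin 4 → ℝ) (M : Fin 4 → ℂ) : ℂ := ∑ i, (u i : ℂ) * M i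

set_option maxHeartbeats 4000000 in
/-- The EWL amplitudes are linear in `u_A`: `⟨jk|ψ_f⟩ = u_Aᵀ·M_{jk}(u_B)`; consequently the
expected payoff is `Σ a_{jk} |u_Aᵀ M_{jk}(u_B)|²`. -/
theorem stmt_14 (γ : ℝ) (hγ : γ ∈ Set.Icc 0 (Real.pi / 2))
    (UA UB : Matrix (Fin 2) (Fin 2) ℂ)
    (hUA : UA ∈ Matrix.specialUnitaryGroup (Fin 2) ℂ)
    (hUB : UB ∈ Matrix.specialUnitaryGroup (Fin 2) ℂ)
    (uA uB : Fin 4 → ℝ) (huA : IsRealRep uA UA) (huB : IsRealRep uB UB) :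
    (∀ j k : Fin 2, amp γ UA UB j k = pairing uA (Mvec γ j k uB)) ∧
      ∀ a : Fin 2 → Fin 2 → ℝ,
        ∑ j, ∑ k, a j k * ‖amp γ UA UB j k‖ ^ 2
          = ∑ j, ∑ k, a j k * ‖pairing uA (Mvec γ j k uB)‖ ^ 2 := by
  have hc : (Real.cos γ : ℂ) = (Real.cos (γ/2) : ℂ)^2 - (Real.sin (γ/2) : ℂ)^2 := by
    have h := Real.cos_two_mul' (γ/2)
    rw [show 2*(γ/2) = γ by ring] at h
    rw [h]; push_cast; ring
  have hs : (Real.sin γ : ℂ) = 2 * (Real.sin (γ/2) : ℂ) * (Real.cos (γ/2) : ℂ) := by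
    have h := Real.sin_two_mul (γ/2)
    rw [show 2*(γ/2) = γ by ring] at h
    rw [h]; push_cast; ring
  have key : ∀ j k : Fin 2, amp γ UA UB j k = pairing uA (Mvec γ j k uB) := by
    intro j k
    subst huA huB
    have hI2 : (Complex.I)^2 = -1 := Complex.I_sq
    have hI3 : (Complex.I)^3 = -Complex.I := by rw [pow_succ, hI2]; ring
    have hI4 : (Complex.I)^4 = 1 := by rw [pow_succ, hI3]; simp [Complex.I_mul_I]
    have hI5 : (Complex.I)^5 = Complex.I := by rw [pow_succ, hI4]; ring
    have hI6 : (Complex.I)^6 = -1 := by rw [pow_succ, hI5, Complex.I_mul_I]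
    have hp : (Real.cos (γ*(1/2)) : ℂ)^2 + (Real.sin (γ*(1/2)) : ℂ)^2 = 1 := by
      have h := Real.sin_sq_add_cos_sq (γ*(1/2))
      have : ((Real.sin (γ*(1/2)))^2 + (Real.cos (γ*(1/2)))^2 : ℂ) = 1 := by
        exact_mod_cast congrArg (Complex.ofReal) h
      linear_combination this
    fin_cases j <;> fin_cases k <;>
      (simp [amp, braket, pairing, Mvec, Jmat, ket, sigmaX, sigmaY, sigmaZ,
        Matrix.mulVec, dotProduct, Fintype.sum_prod_type, Fin.sum_univ_two,
        Fin.sum_univ_four, Matrix.conjTranspose_apply, Matrix.kroneckerMap_apply,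
        Matrix.one_apply, Complex.conj_ofReal, map_add, _root_.map_mul, hc, hs,
        Prod.ext_iff, -Prod.mk_one_one, -Prod.mk_zero_zero,
        -Complex.ofReal_cos, -Complex.ofReal_sin, hI2, hI3, hI4, hI5, hI6];
       ring_nf; simp only [hI2, hI3, hI4, hI5, hI6])
    · linear_combination ((uA 0 : ℂ)*(uB 0) - (uA 3)*(uB 3)) * hp
    · linear_combination (Complex.I*((uA 0 : ℂ)*(uB 1) - (uA 3)*(uB 2))) * hp
    · linear_combination (Complex.I*((uA 1 : ℂ)*(uB 0) - (uA 2)*(uB 3))) * hp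
    · linear_combination ((uA 2 : ℂ)*(uB 2) - (uA 1)*(uB 1)) * hp
  exact ⟨key, fun a => by simp [key]⟩
end

section
/- (Symmetric form for player B.) Fix γ ∈ [0,π/2] and let U_A, U_B ∈ SU(2) have real-vector representations u_A, u_B ∈ ℝ⁴. Let |ψ_f⟩ := J(γ)†(U_A⊗U_B)J(γ)|00⟩. Then the amplitudes, viewed as functions of u_B, satisfy: ⟨00|ψ_f⟩ = u_Bᵀ M_00(u_A), ⟨01|ψ_f⟩ = u_Bᵀ M_10(u_A), ⟨10|ψ_f⟩ = u_Bᵀ M_01(u_A), and ⟨11|ψ_f⟩ = u_Bᵀ M_11(u_A); i.e. the vectors N_{jk}(u_A) defining player B's quadratic form are N_00 = M_00, N_01 = M_10, N_10 = M_01, N_11 = M_11. -/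
set_option maxHeartbeats 2000000


open Complex Real Matrix Kronecker

/-- Symmetric form for player B: the amplitudes as linear functions of `u_B` are given by
`N_00 = M_00(u_A)`, `N_01 = M_10(u_A)`, `N_10 = M_01(u_A)`, `N_11 = M_11(u_A)`. -/
theorem stmt_15 (γ : ℝ) (hγ : γ ∈ Set.Icc 0 (Real.pi / 2))
    (UA UB : Matrix (Fin 2) (Fin 2) ℂ)
    (hUA : UA ∈ Matrix.specialUnitaryGroup (Fin 2) ℂ)
    (hUB : UB ∈ Matrix.specialUnitaryGroup (Fin 2) ℂ)
    (uA uB : Fin 4 → ℝ) (huA : IsRealRep uA UA) (huB : IsRealRep uB UB) :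
    amp γ UA UB 0 0 = pairing uB (Mvec γ 0 0 uA) ∧
    amp γ UA UB 0 1 = pairing uB (Mvec γ 1 0 uA) ∧
    amp γ UA UB 1 0 = pairing uB (Mvec γ 0 1 uA) ∧
    amp γ UA UB 1 1 = pairing uB (Mvec γ 1 1 uA) := by
  have hc : (Real.cos γ : ℂ) = (Real.cos (γ/2) : ℂ)^2 - (Real.sin (γ/2) : ℂ)^2 := by
    have : Real.cos γ = Real.cos (γ/2)^2 - Real.sin (γ/2)^2 := by
      rw [← Real.cos_two_mul']; ring_nf
    rw [this]; push_cast; ring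
  have hs : (Real.sin γ : ℂ) = 2 * (Real.sin (γ/2) : ℂ) * (Real.cos (γ/2) : ℂ) := by
    have : Real.sin γ = 2 * Real.sin (γ/2) * Real.cos (γ/2) := by
      rw [← Real.sin_two_mul]; ring_nf
    rw [this]; push_cast; ring
  have hpy : ∀ x : ℝ, (Real.sin x : ℂ)^2 = 1 - (Real.cos x : ℂ)^2 := by
    intro x
    have h := Real.sin_sq_add_cos_sq x
    have : (Real.sin x^2 + Real.cos x^2 : ℝ) = 1 := h
    calc (Real.sin x : ℂ)^2 = ((Real.sin x^2 + Real.cos x^2 : ℝ) : ℂ) - (Real.cos x : ℂ)^2 := by push_cast; ring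
    _ = 1 - (Real.cos x : ℂ)^2 := by rw [this]; norm_num
  have hI : ∀ n : ℕ, Complex.I ^ (n+2) = -Complex.I ^ n := by
    intro n; rw [pow_add, Complex.I_sq]; ring
  subst huA huB
  refine ⟨?_, ?_, ?_, ?_⟩ <;>
  · simp (config := { decide := true }) only [amp, braket, ket, Jmat, Mvec, pairing, sigmaX, sigmaY, sigmaZ, IsRealRep,
      Matrix.mulVec, Matrix.kroneckerMap_apply, Matrix.conjTranspose_apply, dotProduct,
      Fintype.sum_prod_type, Fin.sum_univ_two, Matrix.add_apply,
      Matrix.smul_apply, Matrix.one_apply, Matrix.cons_val', Matrix.cons_val_zero,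
      Matrix.cons_val_one, Matrix.cons_val_two, Matrix.cons_val_three, Matrix.head_cons, Matrix.of_apply, Function.comp_apply, Matrix.tail_cons, Matrix.vecHead, Matrix.vecTail, Matrix.head_fin_const, Matrix.empty_val',
      Matrix.cons_val_fin_one, smul_eq_mul, map_add, _root_.map_mul, _root_.map_one, map_zero, Fin.sum_univ_four,
      Complex.star_def, Complex.conj_ofReal, Complex.conj_I, Prod.mk.injEq, hc, hs,
      Fin.succ_zero_eq_one, Fin.succ_one_eq_two, if_true, if_false, one_mul, mul_one,
      mul_zero, zero_mul, add_zero, zero_add, star_one, star_zero, neg_neg, mul_neg, neg_mul]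
    ring_nf
    simp only [show (8:ℕ) = 6+2 from rfl, show (7:ℕ) = 5+2 from rfl, show (6:ℕ) = 4+2 from rfl,
      show (5:ℕ) = 3+2 from rfl, show (4:ℕ) = 2+2 from rfl, show (3:ℕ) = 1+2 from rfl,
      hI, Complex.I_sq, pow_one, neg_neg, one_mul, mul_one, mul_neg, neg_mul, hpy]
    ring
end
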